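/- arXiv:2511.21061 — 4 statements merged into one kernel-verified Lean document; each statement's English description precedes it below -/
import Mathlib

section
/- Let Γ be a finite simple graph each of whose edges is colored red, green, or blue, with R red edges, G green edges, and B blue edges, and suppose the number of rainbow triangles of Γ equals √(2·R·G·B) and is positive. Then there exists an integer d ≥ 1 such that for every permutation (c1,c2,c3) of the three colors and every pair of vertices u, v inducing an edge of color c1, there are exactly d vertices w such that uw is an edge of color c2 and vw is an edge of color c3. -/
/-! For distinct colours `c₁, c₂, c₃` and an ordered `c₁`-edge `uv`, let `N(u, v)` count the
vertices `w` with `uw` of colour `c₂` and `vw` of colour `c₃`. Summing `N` over the `2|E₁|` ordered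
`c₁`-edges counts every rainbow triangle once, while `∑ N²` counts tuples `(u, v, x, y)`, which
inject into `E₂ × E₃` via `(ux, vy)`. By Cauchy–Schwarz, `T² ≤ 2|E₁| ∑ N² ≤ 2|E₁||E₂||E₃| = T²`,
so `N` is constant on `c₁`-edges and the injection is onto. Surjectivity says that whenever `ax`
has colour `c₂` and `bx` colour `c₃`, the edge `ab` has colour `c₁`; hence `N(u, v)` is the
`c₂`-degree of `u`. Comparing such degrees at the vertices of one rainbow triangle shows that the
constants agree for all colour orders. -/

open scoped Classical

noncomputable section

namespace RainbowTri

variable {V : Type*} [Fintype V]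

/-- The finset of edges of `Γ` having color `c` (red = 0, green = 1, blue = 2). -/
def colorEdges (Γ : SimpleGraph V) (col : Sym2 V → Fin 3) (c : Fin 3) : Finset (Sym2 V) :=
  Finset.univ.filter (fun e => e ∈ Γ.edgeSet ∧ col e = c)

/-- The finset of rainbow triangles: 3-sets of pairwise adjacent vertices whose three
edges receive three distinct colors. -/
def rainbowTriangles (Γ : SimpleGraph V) (col : Sym2 V → Fin 3) : Finset (Finset V) :=
  Finset.univ.filter (fun s => ∃ a b c : V, s = {a, b, c} ∧
    Γ.Adj a b ∧ Γ.Adj a c ∧ Γ.Adj b c ∧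
    col s(a, b) ≠ col s(a, c) ∧ col s(a, b) ≠ col s(b, c) ∧ col s(a, c) ≠ col s(b, c))

/-- The finset of properly 3-edge-colored copies of `K₄`: 4-sets of pairwise adjacent
vertices on which each color appears on exactly two (disjoint) of the six edges. -/
def properK4s (Γ : SimpleGraph V) (col : Sym2 V → Fin 3) : Finset (Finset V) :=
  Finset.univ.filter (fun s => ∃ a b c d : V, s = {a, b, c, d} ∧
    Γ.Adj a b ∧ Γ.Adj a c ∧ Γ.Adj a d ∧ Γ.Adj b c ∧ Γ.Adj b d ∧ Γ.Adj c d ∧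
    col s(a, b) = col s(c, d) ∧ col s(a, c) = col s(b, d) ∧ col s(a, d) = col s(b, c) ∧
    col s(a, b) ≠ col s(a, c) ∧ col s(a, b) ≠ col s(a, d) ∧ col s(a, c) ≠ col s(a, d))

/-- The color pattern of a proper 3-edge-coloring of `K₄` on vertex set `Fin 4`:
opposite edges get the same color ({0,1},{2,3} ↦ 0; {0,2},{1,3} ↦ 1; {0,3},{1,2} ↦ 2). -/
def pairColor (i j : Fin 4) : Fin 3 :=
  ⟨((i.val ^^^ j.val) - 1) % 3, Nat.mod_lt _ (by norm_num)⟩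

/-- `Γ` (with edge coloring `col`) is obtained from a blowup of a properly
3-edge-colored `K₄` by possibly adding a set of isolated vertices: vertices mapped to
`none` are isolated, vertices are adjacent iff they lie in distinct parts, and colors
between parts follow the proper `K₄`-pattern up to a permutation `σ` of the colors. -/
def IsBlowupK4PlusIsolated (Γ : SimpleGraph V) (col : Sym2 V → Fin 3) : Prop :=
  ∃ (P : V → Option (Fin 4)) (σ : Equiv.Perm (Fin 3)),
    (∀ u v : V, Γ.Adj u v ↔ ∃ i j : Fin 4, i ≠ j ∧ P u = some i ∧ P v = some j) ∧
    (∀ (u v : V) (i j : Fin 4), P u = some i → P v = some j → Γ.Adj u v →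
      col s(u, v) = σ (pairColor i j))

/-- As `IsBlowupK4PlusIsolated`, where moreover the four parts have equal size. -/
def IsBalancedBlowupK4PlusIsolated (Γ : SimpleGraph V) (col : Sym2 V → Fin 3) : Prop :=
  ∃ (P : V → Option (Fin 4)) (σ : Equiv.Perm (Fin 3)),
    (∀ u v : V, Γ.Adj u v ↔ ∃ i j : Fin 4, i ≠ j ∧ P u = some i ∧ P v = some j) ∧
    (∀ (u v : V) (i j : Fin 4), P u = some i → P v = some j → Γ.Adj u v →
      col s(u, v) = σ (pairColor i j)) ∧
    (∀ i j : Fin 4, (Finset.univ.filter (fun v => P v = some i)).card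
      = (Finset.univ.filter (fun v => P v = some j)).card)

/-- `Γ` (with edge coloring `col`) is a balanced blowup of a properly 3-edge-colored
`K₄` (no extra isolated vertices). -/
def IsBalancedBlowupK4 (Γ : SimpleGraph V) (col : Sym2 V → Fin 3) : Prop :=
  ∃ (P : V → Fin 4) (σ : Equiv.Perm (Fin 3)),
    (∀ u v : V, Γ.Adj u v ↔ P u ≠ P v) ∧
    (∀ u v : V, Γ.Adj u v → col s(u, v) = σ (pairColor (P u) (P v))) ∧
    (∀ i j : Fin 4, (Finset.univ.filter (fun v => P v = i)).card
      = (Finset.univ.filter (fun v => P v = j)).card)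

/-- `d⁺(u,v)`: the number of vertices `w` with `uw` blue and `vw` green. -/
def dPlus (Γ : SimpleGraph V) (col : Sym2 V → Fin 3) (u v : V) : ℕ :=
  (Finset.univ.filter (fun w => Γ.Adj u w ∧ col s(u, w) = 2 ∧
    Γ.Adj v w ∧ col s(v, w) = 1)).card

/-- `d⁻(u,v)`: the number of vertices `w` with `uw` green and `vw` blue. -/
def dMinus (Γ : SimpleGraph V) (col : Sym2 V → Fin 3) (u v : V) : ℕ :=
  (Finset.univ.filter (fun w => Γ.Adj u w ∧ col s(u, w) = 1 ∧
    Γ.Adj v w ∧ col s(v, w) = 2)).card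

/-- `d_K(u,v)`: the number of ordered pairs `(w,x)` with `wx` red, `uw`, `vx` green
and `ux`, `vw` blue. -/
def dK (Γ : SimpleGraph V) (col : Sym2 V → Fin 3) (u v : V) : ℕ :=
  (Finset.univ.filter (fun p : V × V => Γ.Adj p.1 p.2 ∧ col s(p.1, p.2) = 0 ∧
    Γ.Adj u p.1 ∧ col s(u, p.1) = 1 ∧ Γ.Adj v p.2 ∧ col s(v, p.2) = 1 ∧
    Γ.Adj u p.2 ∧ col s(u, p.2) = 2 ∧ Γ.Adj v p.1 ∧ col s(v, p.1) = 2)).card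

/-- Ordered pairs of vertices inducing a red edge. -/
def redPairs (Γ : SimpleGraph V) (col : Sym2 V → Fin 3) : Finset (V × V) :=
  Finset.univ.filter (fun p => Γ.Adj p.1 p.2 ∧ col s(p.1, p.2) = 0)

/-- The set `S` of ordered tuples `(u,v,x,y)` with `uv` red, `ux`, `uy` blue and
`vx`, `vy` green (`x = y` allowed). -/
def tupleSet (Γ : SimpleGraph V) (col : Sym2 V → Fin 3) : Finset (V × V × V × V) :=
  Finset.univ.filter (fun t => Γ.Adj t.1 t.2.1 ∧ col s(t.1, t.2.1) = 0 ∧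
    Γ.Adj t.1 t.2.2.1 ∧ col s(t.1, t.2.2.1) = 2 ∧
    Γ.Adj t.1 t.2.2.2 ∧ col s(t.1, t.2.2.2) = 2 ∧
    Γ.Adj t.2.1 t.2.2.1 ∧ col s(t.2.1, t.2.2.1) = 1 ∧
    Γ.Adj t.2.1 t.2.2.2 ∧ col s(t.2.1, t.2.2.2) = 1)

end RainbowTri

open Finset

theorem Finset.eq_of_sq_sum_eq_card_mul_sum_sq {ι R : Type*} [CommRing R] [LinearOrder R]
    [IsStrictOrderedRing R] {s : Finset ι} {f : ι → R}
    (h : (∑ i ∈ s, f i) ^ 2 = #s * ∑ i ∈ s, f i ^ 2) {i j : ι} (hi : i ∈ s) (hj : j ∈ s) :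
    f i = f j := by
  set S := ∑ i ∈ s, f i
  have hdev : ∑ k ∈ s, (#s * f k - S) ^ 2 = #s * (#s * ∑ k ∈ s, f k ^ 2 - S ^ 2) := by
    simp only [sub_sq, sum_add_distrib, sum_sub_distrib, mul_pow, ← mul_sum, ← sum_mul,
      sum_const, nsmul_eq_mul]
    ring
  rw [h, sub_self, mul_zero] at hdev
  have hmean : ∀ k ∈ s, #s * f k = S := fun k hk => sub_eq_zero.mp <| pow_eq_zero_iff two_ne_zero
    |>.mp <| (sum_eq_zero_iff_of_nonneg fun _ _ => sq_nonneg _).mp hdev k hk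
  have hcard : (#s : R) ≠ 0 := Nat.cast_ne_zero.mpr (card_ne_zero_of_mem hi)
  exact mul_left_cancel₀ hcard ((hmean i hi).trans (hmean j hj).symm)

theorem Fin.insert_insert_singleton_eq_univ {c₁ c₂ c₃ : Fin 3} (h₁₂ : c₁ ≠ c₂) (h₁₃ : c₁ ≠ c₃)
    (h₂₃ : c₂ ≠ c₃) : ({c₁, c₂, c₃} : Finset (Fin 3)) = univ := by
  revert c₁ c₂ c₃; decide

namespace RainbowTri

variable {V : Type*} {Γ : SimpleGraph V} {col : Sym2 V → Fin 3}

def colorGraph (Γ : SimpleGraph V) (col : Sym2 V → Fin 3) (c : Fin 3) : SimpleGraph V where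
  Adj u v := Γ.Adj u v ∧ col s(u, v) = c
  symm := ⟨fun _ _ h => ⟨h.1.symm, Sym2.eq_swap ▸ h.2⟩⟩
  loopless := ⟨fun _ h => h.1.ne rfl⟩

@[simp]
lemma colorGraph_adj {c : Fin 3} {u v : V} :
    (colorGraph Γ col c).Adj u v ↔ Γ.Adj u v ∧ col s(u, v) = c := Iff.rfl

lemma eq_of_rainbow_of_insert_eq {c₁ c₂ c₃ : Fin 3} (h₁₂ : c₁ ≠ c₂) (h₁₃ : c₁ ≠ c₃)
    (h₂₃ : c₂ ≠ c₃) {u v w u' v' w' : V}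
    (h : (colorGraph Γ col c₁).Adj u v ∧ (colorGraph Γ col c₂).Adj u w ∧
      (colorGraph Γ col c₃).Adj v w)
    (h' : (colorGraph Γ col c₁).Adj u' v' ∧ (colorGraph Γ col c₂).Adj u' w' ∧
      (colorGraph Γ col c₃).Adj v' w')
    (hs : ({u, v, w} : Finset V) = {u', v', w'}) : u = u' ∧ v = v' ∧ w = w' := by
  have hu : u' ∈ ({u, v, w} : Finset V) := hs ▸ mem_insert_self _ _
  have hv : v' ∈ ({u, v, w} : Finset V) := hs ▸ by simp
  have hw : w' ∈ ({u, v, w} : Finset V) := hs ▸ by simp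
  simp only [mem_insert, mem_singleton] at hu hv hw
  simp only [colorGraph_adj] at h h'
  rcases hu with rfl | rfl | rfl <;> rcases hv with rfl | rfl | rfl <;>
    rcases hw with rfl | rfl | rfl <;> grind [Sym2.eq_swap, SimpleGraph.irrefl]

lemma exists_rainbow_ordering {c₁ c₂ c₃ : Fin 3} (h₁₂ : c₁ ≠ c₂) (h₁₃ : c₁ ≠ c₃)
    (h₂₃ : c₂ ≠ c₃) {a b c : V} (hab : Γ.Adj a b) (hac : Γ.Adj a c) (hbc : Γ.Adj b c)
    (h₁ : col s(a, b) ≠ col s(a, c)) (h₂ : col s(a, b) ≠ col s(b, c))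
    (h₃ : col s(a, c) ≠ col s(b, c)) :
    ∃ u v w : V, ({u, v, w} : Finset V) = {a, b, c} ∧ (colorGraph Γ col c₁).Adj u v ∧
      (colorGraph Γ col c₂).Adj u w ∧ (colorGraph Γ col c₃).Adj v w := by
  have hcol : ∀ k, k = col s(a, b) ∨ k = col s(a, c) ∨ k = col s(b, c) := fun k => by
    simpa only [← Fin.insert_insert_singleton_eq_univ h₁ h₂ h₃, mem_insert, mem_singleton]
      using mem_univ k
  have hab' : (colorGraph Γ col (col s(a, b))).Adj a b := ⟨hab, rfl⟩
  have hac' : (colorGraph Γ col (col s(a, c))).Adj a c := ⟨hac, rfl⟩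
  have hbc' : (colorGraph Γ col (col s(b, c))).Adj b c := ⟨hbc, rfl⟩
  rcases hcol c₁ with rfl | rfl | rfl <;> rcases hcol c₂ with rfl | rfl | rfl <;>
    rcases hcol c₃ with rfl | rfl | rfl <;> first
    | exact absurd rfl h₁₂ | exact absurd rfl h₁₃ | exact absurd rfl h₂₃
    | exact ⟨a, b, c, rfl, hab', hac', hbc'⟩
    | exact ⟨a, c, b, by grind, hac', hab', hbc'.symm⟩
    | exact ⟨b, a, c, by grind, hab'.symm, hbc', hac'⟩
    | exact ⟨b, c, a, by grind, hbc', hab'.symm, hac'.symm⟩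
    | exact ⟨c, a, b, by grind, hac'.symm, hbc'.symm, hab'⟩
    | exact ⟨c, b, a, by grind, hbc'.symm, hac'.symm, hab'.symm⟩

variable [Fintype V]

lemma edgeFinset_colorGraph (c : Fin 3) :
    (colorGraph Γ col c).edgeFinset = colorEdges Γ col c := by
  ext e
  induction e using Sym2.ind
  simp [colorEdges]

lemma card_dart_colorGraph (c : Fin 3) :
    Fintype.card (colorGraph Γ col c).Dart = 2 * #(colorEdges Γ col c) := by
  rw [SimpleGraph.dart_card_eq_twice_card_edges, edgeFinset_colorGraph]

def commonNbrs (Γ : SimpleGraph V) (col : Sym2 V → Fin 3) (c₂ c₃ : Fin 3) (u v : V) : Finset V :=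
  (colorGraph Γ col c₂).neighborFinset u ∩ (colorGraph Γ col c₃).neighborFinset v

lemma mem_commonNbrs {c₂ c₃ : Fin 3} {u v w : V} :
    w ∈ commonNbrs Γ col c₂ c₃ u v ↔
      (colorGraph Γ col c₂).Adj u w ∧ (colorGraph Γ col c₃).Adj v w := by
  simp only [commonNbrs, mem_inter, SimpleGraph.mem_neighborFinset]

lemma commonNbrs_comm (c₂ c₃ : Fin 3) (u v : V) :
    commonNbrs Γ col c₂ c₃ u v = commonNbrs Γ col c₃ c₂ v u :=
  inter_comm _ _

variable {c₁ c₂ c₃ : Fin 3}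

lemma sum_card_commonNbrs_eq_card_rainbowTriangles (h₁₂ : c₁ ≠ c₂) (h₁₃ : c₁ ≠ c₃)
    (h₂₃ : c₂ ≠ c₃) :
    ∑ d : (colorGraph Γ col c₁).Dart, #(commonNbrs Γ col c₂ c₃ d.fst d.snd) =
      #(rainbowTriangles Γ col) := by
  rw [← card_sigma]
  refine card_bij (fun p _ => {p.1.fst, p.1.snd, p.2}) ?_ ?_ ?_
  · rintro ⟨d, w⟩ hp
    obtain ⟨hu, hv⟩ := mem_commonNbrs.mp (mem_sigma.mp hp).2
    simp only [rainbowTriangles, mem_filter, mem_univ, true_and]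
    refine ⟨d.fst, d.snd, w, rfl, d.adj.1, hu.1, hv.1, ?_, ?_, ?_⟩ <;>
      simpa only [d.adj.2, hu.2, hv.2]
  · rintro ⟨d, w⟩ hp ⟨d', w'⟩ hp' hs
    obtain ⟨hu, hv⟩ := mem_commonNbrs.mp (mem_sigma.mp hp).2
    obtain ⟨hu', hv'⟩ := mem_commonNbrs.mp (mem_sigma.mp hp').2
    obtain ⟨h₁, h₂, rfl⟩ :=
      eq_of_rainbow_of_insert_eq h₁₂ h₁₃ h₂₃ ⟨d.adj, hu, hv⟩ ⟨d'.adj, hu', hv'⟩ hs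
    rw [SimpleGraph.Dart.ext _ _ (Prod.ext h₁ h₂)]
  · intro s hs
    simp only [rainbowTriangles, mem_filter, mem_univ, true_and] at hs
    obtain ⟨a, b, c, rfl, hab, hac, hbc, h₁, h₂, h₃⟩ := hs
    obtain ⟨u, v, w, hs, huv, huw, hvw⟩ :=
      exists_rainbow_ordering h₁₂ h₁₃ h₂₃ hab hac hbc h₁ h₂ h₃
    exact ⟨⟨⟨(u, v), huv⟩, w⟩, mem_sigma.mpr ⟨mem_univ _, mem_commonNbrs.mpr ⟨huw, hvw⟩⟩, hs⟩

def commonNbrPairs (Γ : SimpleGraph V) (col : Sym2 V → Fin 3) (c₁ c₂ c₃ : Fin 3) :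
    Finset (Σ _ : (colorGraph Γ col c₁).Dart, V × V) :=
  univ.sigma fun d => commonNbrs Γ col c₂ c₃ d.fst d.snd ×ˢ commonNbrs Γ col c₂ c₃ d.fst d.snd

lemma card_commonNbrPairs :
    #(commonNbrPairs Γ col c₁ c₂ c₃) =
      ∑ d : (colorGraph Γ col c₁).Dart, #(commonNbrs Γ col c₂ c₃ d.fst d.snd) ^ 2 := by
  simp only [commonNbrPairs, card_sigma, card_product, sq]

lemma mem_commonNbrPairs {p : Σ _ : (colorGraph Γ col c₁).Dart, V × V} :
    p ∈ commonNbrPairs Γ col c₁ c₂ c₃ ↔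
      p.2.1 ∈ commonNbrs Γ col c₂ c₃ p.1.fst p.1.snd ∧
        p.2.2 ∈ commonNbrs Γ col c₂ c₃ p.1.fst p.1.snd := by
  simp only [commonNbrPairs, mem_sigma, mem_univ, mem_product, true_and]

def edgePairOf (p : Σ _ : (colorGraph Γ col c₁).Dart, V × V) : Sym2 V × Sym2 V :=
  (s(p.1.fst, p.2.1), s(p.1.snd, p.2.2))

lemma edgePairOf_mem {p : Σ _ : (colorGraph Γ col c₁).Dart, V × V}
    (hp : p ∈ commonNbrPairs Γ col c₁ c₂ c₃) :
    edgePairOf p ∈ colorEdges Γ col c₂ ×ˢ colorEdges Γ col c₃ := by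
  simp only [mem_commonNbrPairs, mem_commonNbrs, colorGraph_adj] at hp
  simp [edgePairOf, colorEdges, hp]

lemma edgePairOf_injOn (h₁₂ : c₁ ≠ c₂) (h₁₃ : c₁ ≠ c₃) (h₂₃ : c₂ ≠ c₃) :
    Set.InjOn edgePairOf
      (↑(commonNbrPairs Γ col c₁ c₂ c₃) : Set (Σ _ : (colorGraph Γ col c₁).Dart, V × V)) := by
  rintro ⟨⟨⟨u, v⟩, huv⟩, x, y⟩ hp ⟨⟨⟨u', v'⟩, huv'⟩, x', y'⟩ hp' he
  simp only [mem_coe, mem_commonNbrPairs, mem_commonNbrs, colorGraph_adj] at hp hp' huv huv'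
  simp only [edgePairOf, Prod.mk.injEq, Sym2.eq_iff] at he
  grind [Sym2.eq_swap]

lemma sum_sq_card_commonNbrs_le (h₁₂ : c₁ ≠ c₂) (h₁₃ : c₁ ≠ c₃) (h₂₃ : c₂ ≠ c₃) :
    ∑ d : (colorGraph Γ col c₁).Dart, #(commonNbrs Γ col c₂ c₃ d.fst d.snd) ^ 2 ≤
      #(colorEdges Γ col c₂) * #(colorEdges Γ col c₃) := by
  rw [← card_commonNbrPairs, ← card_product]
  exact card_le_card_of_injOn _ (fun _ => edgePairOf_mem) (edgePairOf_injOn h₁₂ h₁₃ h₂₃)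

def IsRainbowExtremal (Γ : SimpleGraph V) (col : Sym2 V → Fin 3) : Prop :=
  0 < #(rainbowTriangles Γ col) ∧ #(rainbowTriangles Γ col) ^ 2 = 2 * ∏ c, #(colorEdges Γ col c)

lemma prod_card_colorEdges (h₁₂ : c₁ ≠ c₂) (h₁₃ : c₁ ≠ c₃) (h₂₃ : c₂ ≠ c₃) :
    ∏ c, #(colorEdges Γ col c) =
      #(colorEdges Γ col c₁) * (#(colorEdges Γ col c₂) * #(colorEdges Γ col c₃)) := by
  rw [← Fin.insert_insert_singleton_eq_univ h₁₂ h₁₃ h₂₃, prod_insert (by simp [h₁₂, h₁₃]),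
    prod_insert (by simpa), prod_singleton]

/-- Both inequalities in `T² ≤ 2|E₁| ∑ N² ≤ 2|E₁||E₂||E₃|`, where `N` counts common neighbours
along `c₁`-darts, are equalities. -/
lemma IsRainbowExtremal.sq_sum_eq_and_sum_sq_eq (hext : IsRainbowExtremal Γ col)
    (h₁₂ : c₁ ≠ c₂) (h₁₃ : c₁ ≠ c₃) (h₂₃ : c₂ ≠ c₃) :
    (∑ d : (colorGraph Γ col c₁).Dart, #(commonNbrs Γ col c₂ c₃ d.fst d.snd)) ^ 2 =
        #(univ : Finset (colorGraph Γ col c₁).Dart) *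
          ∑ d : (colorGraph Γ col c₁).Dart, #(commonNbrs Γ col c₂ c₃ d.fst d.snd) ^ 2 ∧
      ∑ d : (colorGraph Γ col c₁).Dart, #(commonNbrs Γ col c₂ c₃ d.fst d.snd) ^ 2 =
        #(colorEdges Γ col c₂) * #(colorEdges Γ col c₃) := by
  obtain ⟨hpos, hT⟩ := hext
  rw [prod_card_colorEdges h₁₂ h₁₃ h₂₃, ← mul_assoc] at hT
  have hsum := sum_card_commonNbrs_eq_card_rainbowTriangles (Γ := Γ) (col := col) h₁₂ h₁₃ h₂₃
  have hdarts : #(univ : Finset (colorGraph Γ col c₁).Dart) = 2 * #(colorEdges Γ col c₁) := by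
    rw [card_univ, card_dart_colorGraph]
  have hne : 0 < 2 * #(colorEdges Γ col c₁) := by
    obtain ⟨d, -, -⟩ := exists_ne_zero_of_sum_ne_zero (hsum.trans_ne hpos.ne')
    exact hdarts ▸ card_pos.mpr ⟨d, mem_univ d⟩
  have hCS : #(rainbowTriangles Γ col) ^ 2 ≤ 2 * #(colorEdges Γ col c₁) *
      ∑ d : (colorGraph Γ col c₁).Dart, #(commonNbrs Γ col c₂ c₃ d.fst d.snd) ^ 2 :=
    hsum ▸ hdarts ▸ sq_sum_le_card_mul_sum_sq
  have heq := le_antisymm (sum_sq_card_commonNbrs_le h₁₂ h₁₃ h₂₃)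
    (Nat.le_of_mul_le_mul_left (hT ▸ hCS) hne)
  exact ⟨by rw [hsum, hdarts, heq, hT], heq⟩

lemma IsRainbowExtremal.card_commonNbrs_eq (hext : IsRainbowExtremal Γ col)
    (h₁₂ : c₁ ≠ c₂) (h₁₃ : c₁ ≠ c₃) (h₂₃ : c₂ ≠ c₃) {u v x y : V}
    (huv : (colorGraph Γ col c₁).Adj u v) (hxy : (colorGraph Γ col c₁).Adj x y) :
    #(commonNbrs Γ col c₂ c₃ u v) = #(commonNbrs Γ col c₂ c₃ x y) := by
  have h := (hext.sq_sum_eq_and_sum_sq_eq h₁₂ h₁₃ h₂₃).1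
  exact_mod_cast eq_of_sq_sum_eq_card_mul_sum_sq (R := ℤ)
    (f := fun d : (colorGraph Γ col c₁).Dart => (#(commonNbrs Γ col c₂ c₃ d.fst d.snd) : ℤ))
    (by exact_mod_cast h) (mem_univ ⟨(u, v), huv⟩) (mem_univ ⟨(x, y), hxy⟩)

lemma IsRainbowExtremal.adj_of_adj_of_adj (hext : IsRainbowExtremal Γ col)
    (h₁₂ : c₁ ≠ c₂) (h₁₃ : c₁ ≠ c₃) (h₂₃ : c₂ ≠ c₃) {a b x : V}
    (hax : (colorGraph Γ col c₂).Adj a x) (hbx : (colorGraph Γ col c₃).Adj b x) :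
    (colorGraph Γ col c₁).Adj a b := by
  have hsurj := surjOn_of_injOn_of_card_le (s := commonNbrPairs Γ col c₁ c₂ c₃)
    (t := colorEdges Γ col c₂ ×ˢ colorEdges Γ col c₃) edgePairOf (fun _ => edgePairOf_mem)
    (edgePairOf_injOn h₁₂ h₁₃ h₂₃) <| by
      rw [card_product, card_commonNbrPairs, (hext.sq_sum_eq_and_sum_sq_eq h₁₂ h₁₃ h₂₃).2]
  have hmem : (s(a, x), s(b, x)) ∈ colorEdges Γ col c₂ ×ˢ colorEdges Γ col c₃ := by
    simp only [colorGraph_adj] at hax hbx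
    simp [colorEdges, hax, hbx]
  obtain ⟨⟨⟨⟨u, v⟩, huv⟩, x', y'⟩, hp, he⟩ := hsurj hmem
  simp only [mem_coe, mem_commonNbrPairs, mem_commonNbrs] at hp
  simp only [edgePairOf, Prod.mk.injEq, Sym2.eq_iff] at he
  rcases he with ⟨⟨rfl, rfl⟩ | ⟨rfl, rfl⟩, ⟨rfl, rfl⟩ | ⟨rfl, rfl⟩⟩
  · exact huv
  all_goals grind [SimpleGraph.irrefl]

lemma IsRainbowExtremal.commonNbrs_eq_neighborFinset (hext : IsRainbowExtremal Γ col)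
    (h₁₂ : c₁ ≠ c₂) (h₁₃ : c₁ ≠ c₃) (h₂₃ : c₂ ≠ c₃) {u v : V}
    (huv : (colorGraph Γ col c₁).Adj u v) :
    commonNbrs Γ col c₂ c₃ u v = (colorGraph Γ col c₂).neighborFinset u :=
  inter_eq_left.mpr fun w hw => by
    rw [SimpleGraph.mem_neighborFinset] at hw ⊢
    exact hext.adj_of_adj_of_adj h₁₃.symm h₂₃.symm h₁₂ huv.symm hw.symm

lemma IsRainbowExtremal.card_commonNbrs_eq_degree (hext : IsRainbowExtremal Γ col)
    (h₁₂ : c₁ ≠ c₂) (h₁₃ : c₁ ≠ c₃) (h₂₃ : c₂ ≠ c₃) {u v x y : V}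
    (huv : (colorGraph Γ col c₁).Adj u v) (hxy : (colorGraph Γ col c₁).Adj x y) {c : Fin 3}
    (hc : c ≠ c₁) : #(commonNbrs Γ col c₂ c₃ u v) = (colorGraph Γ col c).degree x := by
  obtain rfl | rfl : c = c₂ ∨ c = c₃ := by
    simpa [← Fin.insert_insert_singleton_eq_univ h₁₂ h₁₃ h₂₃, hc] using mem_univ c
  · rw [hext.card_commonNbrs_eq h₁₂ h₁₃ h₂₃ huv hxy,
      hext.commonNbrs_eq_neighborFinset h₁₂ h₁₃ h₂₃ hxy,
      SimpleGraph.card_neighborFinset_eq_degree]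
  · rw [commonNbrs_comm, hext.card_commonNbrs_eq h₁₃ h₁₂ h₂₃.symm huv.symm hxy,
      hext.commonNbrs_eq_neighborFinset h₁₃ h₁₂ h₂₃.symm hxy,
      SimpleGraph.card_neighborFinset_eq_degree]

lemma filter_adj_eq_commonNbrs (c₂ c₃ : Fin 3) (u v : V) :
    univ.filter (fun w => Γ.Adj u w ∧ col s(u, w) = c₂ ∧ Γ.Adj v w ∧ col s(v, w) = c₃) =
      commonNbrs Γ col c₂ c₃ u v := by
  ext w
  simp [mem_commonNbrs, and_assoc]

/-- If a 3-edge-colored graph has exactly `√(2·R·G·B) > 0` rainbow triangles, then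
there is a `d ≥ 1` such that for every permutation `(c₁,c₂,c₃)` of the colors and
every edge `uv` of color `c₁`, there are exactly `d` vertices `w` with `uw` of color
`c₂` and `vw` of color `c₃`. -/
theorem stmt13 (Γ : SimpleGraph V) (col : Sym2 V → Fin 3) (R G B T : ℕ)
    (hR : R = (colorEdges Γ col 0).card)
    (hG : G = (colorEdges Γ col 1).card)
    (hB : B = (colorEdges Γ col 2).card)
    (hT : T = (rainbowTriangles Γ col).card)
    (heq : (T : ℝ) = Real.sqrt (2 * R * G * B))
    (hpos : 0 < T) :
    ∃ d : ℕ, 1 ≤ d ∧ ∀ c₁ c₂ c₃ : Fin 3, c₁ ≠ c₂ → c₁ ≠ c₃ → c₂ ≠ c₃ →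
      ∀ u v : V, Γ.Adj u v → col s(u, v) = c₁ →
        (Finset.univ.filter (fun w => Γ.Adj u w ∧ col s(u, w) = c₂ ∧
          Γ.Adj v w ∧ col s(v, w) = c₃)).card = d := by
  have hsq : T ^ 2 = 2 * R * G * B := by
    have h : (T : ℝ) ^ 2 = 2 * R * G * B := by rw [heq, Real.sq_sqrt (by positivity)]
    exact_mod_cast h
  have hext : IsRainbowExtremal Γ col :=
    ⟨hT ▸ hpos, by rw [Fin.prod_univ_three, ← hT, ← hR, ← hG, ← hB, hsq]; ring⟩
  obtain ⟨s, hs⟩ := card_pos.mp hext.1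
  simp only [rainbowTriangles, mem_filter, mem_univ, true_and] at hs
  obtain ⟨x, y, z, -, hxy, hxz, hyz, hxy_xz, hxy_yz, hxz_yz⟩ := hs
  have hxy' : (colorGraph Γ col (col s(x, y))).Adj x y := ⟨hxy, rfl⟩
  have hxz' : (colorGraph Γ col (col s(x, z))).Adj x z := ⟨hxz, rfl⟩
  have hyz' : (colorGraph Γ col (col s(y, z))).Adj y z := ⟨hyz, rfl⟩
  refine ⟨#(commonNbrs Γ col (col s(x, z)) (col s(y, z)) x y),
    card_pos.mpr ⟨z, mem_commonNbrs.mpr ⟨hxz', hyz'⟩⟩, ?_⟩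
  intro c₁ c₂ c₃ h₁₂ h₁₃ h₂₃ u v huv hc
  have huv' : (colorGraph Γ col c₁).Adj u v := ⟨huv, hc⟩
  rw [filter_adj_eq_commonNbrs]
  -- `d` is the `col s(y, z)`-degree of `x` and the `col s(x, z)`-degree of `y`.
  obtain rfl | rfl | rfl : c₁ = col s(x, y) ∨ c₁ = col s(x, z) ∨ c₁ = col s(y, z) := by
    simpa [← Fin.insert_insert_singleton_eq_univ hxy_xz hxy_yz hxz_yz] using mem_univ c₁
  · rw [hext.card_commonNbrs_eq_degree h₁₂ h₁₃ h₂₃ huv' hxy' hxy_yz.symm,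
      hext.card_commonNbrs_eq_degree hxy_xz hxy_yz hxz_yz hxy' hxy' hxy_yz.symm]
  · rw [hext.card_commonNbrs_eq_degree h₁₂ h₁₃ h₂₃ huv' hxz' hxz_yz.symm,
      hext.card_commonNbrs_eq_degree hxy_xz hxy_yz hxz_yz hxy' hxy' hxy_yz.symm]
  · rw [hext.card_commonNbrs_eq_degree h₁₂ h₁₃ h₂₃ huv' hyz' hxz_yz,
      hext.card_commonNbrs_eq_degree hxy_xz hxy_yz hxz_yz hxy' hxy'.symm hxy_xz.symm]

end RainbowTri
end
end

section
/- Let Γ be a finite simple graph each of whose edges is colored red, green, or blue, with R red edges, G green edges, and B blue edges, and suppose the number of rainbow triangles of Γ equals √(2·R·G·B) and is positive. Then there exists an integer d ≥ 1 such that every vertex of Γ that is incident to at least one edge is incident to exactly d red, exactly d green, and exactly d blue edges. -/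
open scoped Classical

noncomputable section

namespace RainbowTri

variable {V : Type*} [Fintype V]

def nb (Γ : SimpleGraph V) (col : Sym2 V → Fin 3) (c : Fin 3) (v : V) : Finset V :=
  Finset.univ.filter (fun w => Γ.Adj v w ∧ col s(v, w) = c)

def aS (Γ : SimpleGraph V) (col : Sym2 V → Fin 3) (q r : Fin 3) (u v : V) : Finset V :=
  Finset.univ.filter (fun w => Γ.Adj u w ∧ col s(u, w) = q ∧ Γ.Adj v w ∧ col s(v, w) = r)

def pPairs (Γ : SimpleGraph V) (col : Sym2 V → Fin 3) (p : Fin 3) : Finset (V × V) :=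
  Finset.univ.filter (fun x => Γ.Adj x.1 x.2 ∧ col s(x.1, x.2) = p)

def trip (Γ : SimpleGraph V) (col : Sym2 V → Fin 3) (p q r : Fin 3) : Finset (V × V × V) :=
  Finset.univ.filter (fun t => Γ.Adj t.1 t.2.1 ∧ col s(t.1, t.2.1) = p ∧
    Γ.Adj t.1 t.2.2 ∧ col s(t.1, t.2.2) = q ∧ Γ.Adj t.2.1 t.2.2 ∧ col s(t.2.1, t.2.2) = r)

def tupl (Γ : SimpleGraph V) (col : Sym2 V → Fin 3) (p q r : Fin 3) : Finset (V × V × V × V) :=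
  Finset.univ.filter (fun t => Γ.Adj t.1 t.2.1 ∧ col s(t.1, t.2.1) = p ∧
    Γ.Adj t.1 t.2.2.1 ∧ col s(t.1, t.2.2.1) = q ∧ Γ.Adj t.1 t.2.2.2 ∧ col s(t.1, t.2.2.2) = q ∧
    Γ.Adj t.2.1 t.2.2.1 ∧ col s(t.2.1, t.2.2.1) = r ∧ Γ.Adj t.2.1 t.2.2.2 ∧ col s(t.2.1, t.2.2.2) = r)

lemma card_pPairs (Γ : SimpleGraph V) (col : Sym2 V → Fin 3) (p : Fin 3) :
    (pPairs Γ col p).card = 2 * (colorEdges Γ col p).card := by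
  have hmap : ∀ x ∈ pPairs Γ col p, s(x.1, x.2) ∈ colorEdges Γ col p := by
    rintro ⟨a, b⟩ hx
    simp only [pPairs, Finset.mem_filter, Finset.mem_univ, true_and] at hx
    simp only [colorEdges, Finset.mem_filter, Finset.mem_univ, true_and,
      SimpleGraph.mem_edgeSet]
    exact hx
  have hfib : ∀ e ∈ colorEdges Γ col p,
      ((pPairs Γ col p).filter (fun x => s(x.1, x.2) = e)).card = 2 := by
    intro e he
    simp only [colorEdges, Finset.mem_filter, Finset.mem_univ, true_and] at he
    obtain ⟨hmem, hcol⟩ := he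
    induction e with
    | h a b =>
      have hadj : Γ.Adj a b := hmem
      have hne : a ≠ b := hadj.ne
      have : (pPairs Γ col p).filter (fun x => s(x.1, x.2) = s(a, b))
          = {(a, b), (b, a)} := by
        ext ⟨u, v⟩
        simp only [Finset.mem_filter, pPairs, Finset.mem_univ, true_and,
          Finset.mem_insert, Finset.mem_singleton, Prod.mk.injEq, Sym2.eq_iff]
        constructor
        · rintro ⟨-, (⟨rfl, rfl⟩ | ⟨rfl, rfl⟩)⟩
          · exact Or.inl ⟨rfl, rfl⟩
          · exact Or.inr ⟨rfl, rfl⟩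
        · rintro (⟨rfl, rfl⟩ | ⟨rfl, rfl⟩)
          · exact ⟨⟨hadj, hcol⟩, Or.inl ⟨rfl, rfl⟩⟩
          · exact ⟨⟨hadj.symm, by rwa [Sym2.eq_swap]⟩, Or.inr ⟨rfl, rfl⟩⟩
      rw [this, Finset.card_insert_of_notMem, Finset.card_singleton]
      simp only [Finset.mem_singleton, Prod.mk.injEq]
      rintro ⟨rfl, -⟩
      exact hne rfl
  rw [Finset.card_eq_sum_card_fiberwise hmap, Finset.sum_congr rfl hfib, Finset.sum_const,
    smul_eq_mul, mul_comm]

lemma fin3_cases : ∀ x y z p q r : Fin 3, x ≠ y → x ≠ z → y ≠ z → p ≠ q → p ≠ r → q ≠ r →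
    ((x=p∧y=q∧z=r) ∨ (x=p∧y=r∧z=q) ∨ (x=q∧y=p∧z=r) ∨ (x=q∧y=r∧z=p) ∨ (x=r∧y=p∧z=q) ∨ (x=r∧y=q∧z=p)) := by
  decide

lemma fin3_prod (f : Fin 3 → ℕ) (p q r : Fin 3) (hpq : p ≠ q) (hpr : p ≠ r) (hqr : q ≠ r) :
    f p * f q * f r = f 0 * f 1 * f 2 := by
  rcases fin3_cases p q r 0 1 2 hpq hpr hqr (by decide) (by decide) (by decide) with
    ⟨rfl,rfl,rfl⟩|⟨rfl,rfl,rfl⟩|⟨rfl,rfl,rfl⟩|⟨rfl,rfl,rfl⟩|⟨rfl,rfl,rfl⟩|⟨rfl,rfl,rfl⟩ <;> ring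

lemma variance_identity {α : Type*} (s : Finset α) (f : α → ℕ) :
    ∑ x ∈ s, ∑ y ∈ s, ((f x : ℤ) - f y)^2
      = 2 * (s.card * ∑ x ∈ s, (f x : ℤ)^2 - (∑ x ∈ s, (f x : ℤ))^2) := by
  have key : ∀ x ∈ s, ∑ y ∈ s, ((f x : ℤ) - f y)^2
      = s.card * (f x:ℤ)^2 - (2 * ∑ y ∈ s, (f y:ℤ)) * f x + ∑ y ∈ s, (f y:ℤ)^2 := by
    intro x _
    rw [Finset.sum_congr rfl (fun y _ => by ring :
      ∀ y ∈ s, ((f x : ℤ) - f y)^2 = (f x:ℤ)^2 - 2 * f x * f y + (f y:ℤ)^2)]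
    rw [Finset.sum_add_distrib, Finset.sum_sub_distrib, Finset.sum_const, ← Finset.mul_sum]
    push_cast; ring
  rw [Finset.sum_congr rfl key, Finset.sum_add_distrib, Finset.sum_sub_distrib,
    Finset.sum_const]
  simp only [← Finset.mul_sum, nsmul_eq_mul]
  push_cast; ring

lemma cauchy_nat {α : Type*} (s : Finset α) (f : α → ℕ) :
    (∑ x ∈ s, f x)^2 ≤ s.card * ∑ x ∈ s, (f x)^2 := by
  have h := variance_identity s f
  have hnn : 0 ≤ ∑ x ∈ s, ∑ y ∈ s, ((f x : ℤ) - f y)^2 :=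
    Finset.sum_nonneg fun x _ => Finset.sum_nonneg fun y _ => sq_nonneg _
  have h2 : ((∑ x ∈ s, f x : ℕ) : ℤ)^2 ≤ (s.card : ℤ) * ∑ x ∈ s, ((f x)^2 : ℤ) := by
    push_cast; linarith
  exact_mod_cast h2

lemma cauchy_eq {α : Type*} (s : Finset α) (f : α → ℕ)
    (h : (∑ x ∈ s, f x)^2 = s.card * ∑ x ∈ s, (f x)^2) :
    ∀ x ∈ s, ∀ y ∈ s, f x = f y := by
  have h' : ∑ x ∈ s, ∑ y ∈ s, ((f x : ℤ) - f y)^2 = 0 := by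
    rw [variance_identity s f]
    have : ((∑ x ∈ s, f x : ℕ) : ℤ)^2 = (s.card : ℤ) * ∑ x ∈ s, ((f x)^2 : ℤ) := by
      exact_mod_cast h
    push_cast at this ⊢; linarith
  intro x hx y hy
  have hx' := (Finset.sum_eq_zero_iff_of_nonneg
    (fun x _ => Finset.sum_nonneg fun y _ => sq_nonneg _)).mp h' x hx
  have := (Finset.sum_eq_zero_iff_of_nonneg (fun y _ => sq_nonneg _)).mp hx' y hy
  have := pow_eq_zero_iff (n := 2) (by norm_num) |>.mp this
  omega

lemma card_trip (Γ : SimpleGraph V) (col : Sym2 V → Fin 3) (p q r : Fin 3)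
    (hpq : p ≠ q) (hpr : p ≠ r) (hqr : q ≠ r) :
    (trip Γ col p q r).card = (rainbowTriangles Γ col).card := by
  apply Finset.card_bij (fun t _ => ({t.1, t.2.1, t.2.2} : Finset V))
  · rintro ⟨a, b, c⟩ ht
    simp only [trip, Finset.mem_filter, Finset.mem_univ, true_and] at ht
    obtain ⟨hab, cab, hac, cac, hbc, cbc⟩ := ht
    simp only [rainbowTriangles, Finset.mem_filter, Finset.mem_univ, true_and]
    exact ⟨a, b, c, rfl, hab, hac, hbc, by rw [cab, cac]; exact hpq,
      by rw [cab, cbc]; exact hpr, by rw [cac, cbc]; exact hqr⟩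
  · rintro ⟨a, b, c⟩ ht ⟨a', b', c'⟩ ht' heq
    simp only [trip, Finset.mem_filter, Finset.mem_univ, true_and] at ht ht'
    obtain ⟨hab, cab, hac, cac, hbc, cbc⟩ := ht
    obtain ⟨hab', cab', hac', cac', hbc', cbc'⟩ := ht'
    simp only at heq
    have ha' : a' = a ∨ a' = b ∨ a' = c := by
      have : a' ∈ ({a, b, c} : Finset V) := by rw [heq]; simp
      simpa using this
    have hb' : b' = a ∨ b' = b ∨ b' = c := by
      have : b' ∈ ({a, b, c} : Finset V) := by rw [heq]; simp
      simpa using this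
    have hc' : c' = a ∨ c' = b ∨ c' = c := by
      have : c' ∈ ({a, b, c} : Finset V) := by rw [heq]; simp
      simpa using this
    rcases ha' with rfl|rfl|rfl <;> rcases hb' with rfl|rfl|rfl <;>
      rcases hc' with rfl|rfl|rfl <;> simp_all [Sym2.eq_swap]
  · intro s hs
    simp only [rainbowTriangles, Finset.mem_filter, Finset.mem_univ, true_and] at hs
    obtain ⟨a, b, c, rfl, hab, hac, hbc, h1, h2, h3⟩ := hs
    have hmem : ∀ u v w : V, Γ.Adj u v → col s(u,v) = p → Γ.Adj u w → col s(u,w) = q →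
        Γ.Adj v w → col s(v,w) = r → (u, v, w) ∈ trip Γ col p q r := by
      intro u v w h1 h2 h3 h4 h5 h6
      simp only [trip, Finset.mem_filter, Finset.mem_univ, true_and]
      exact ⟨h1, h2, h3, h4, h5, h6⟩
    rcases fin3_cases (col s(a,b)) (col s(a,c)) (col s(b,c)) p q r h1 h2 h3 hpq hpr hqr with
      ⟨e1,e2,e3⟩|⟨e1,e2,e3⟩|⟨e1,e2,e3⟩|⟨e1,e2,e3⟩|⟨e1,e2,e3⟩|⟨e1,e2,e3⟩
    · exact ⟨(a, b, c), hmem a b c hab e1 hac e2 hbc e3, rfl⟩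
    · refine ⟨(b, a, c), hmem b a c hab.symm (by rwa [Sym2.eq_swap]) hbc e3 hac e2, ?_⟩
      ext x; simp only [Finset.mem_insert, Finset.mem_singleton]; tauto
    · refine ⟨(a, c, b), hmem a c b hac e2 hab e1 hbc.symm (by rwa [Sym2.eq_swap]), ?_⟩
      ext x; simp only [Finset.mem_insert, Finset.mem_singleton]; tauto
    · refine ⟨(b, c, a), hmem b c a hbc e3 hab.symm (by rwa [Sym2.eq_swap])
        hac.symm (by rwa [Sym2.eq_swap]), ?_⟩
      ext x; simp only [Finset.mem_insert, Finset.mem_singleton]; tauto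
    · refine ⟨(c, a, b), hmem c a b hac.symm (by rwa [Sym2.eq_swap])
        hbc.symm (by rwa [Sym2.eq_swap]) hab e1, ?_⟩
      ext x; simp only [Finset.mem_insert, Finset.mem_singleton]; tauto
    · refine ⟨(c, b, a), hmem c b a hbc.symm (by rwa [Sym2.eq_swap])
        hac.symm (by rwa [Sym2.eq_swap]) hab.symm (by rwa [Sym2.eq_swap]), ?_⟩
      ext x; simp only [Finset.mem_insert, Finset.mem_singleton]; tauto

lemma trip_sum (Γ : SimpleGraph V) (col : Sym2 V → Fin 3) (p q r : Fin 3) :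
    (trip Γ col p q r).card = ∑ x ∈ pPairs Γ col p, (aS Γ col q r x.1 x.2).card := by
  have hmap : ∀ t ∈ trip Γ col p q r, (t.1, t.2.1) ∈ pPairs Γ col p := by
    rintro ⟨a, b, c⟩ ht
    simp only [trip, Finset.mem_filter, Finset.mem_univ, true_and] at ht
    simp only [pPairs, Finset.mem_filter, Finset.mem_univ, true_and]
    exact ⟨ht.1, ht.2.1⟩
  rw [Finset.card_eq_sum_card_fiberwise hmap]
  refine Finset.sum_congr rfl ?_
  rintro ⟨u, v⟩ hx
  apply Finset.card_bij' (fun t _ => t.2.2) (fun w _ => (u, v, w))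
  case hi =>
    rintro ⟨a, b, c⟩ ht
    simp only [Finset.mem_filter, trip, Finset.mem_univ, true_and, Prod.mk.injEq] at ht
    obtain ⟨⟨hab, cab, hac, cac, hbc, cbc⟩, rfl, rfl⟩ := ht
    simp only [aS, Finset.mem_filter, Finset.mem_univ, true_and]
    exact ⟨hac, cac, hbc, cbc⟩
  case hj =>
    intro w hw
    simp only [aS, Finset.mem_filter, Finset.mem_univ, true_and] at hw
    simp only [pPairs, Finset.mem_filter, Finset.mem_univ, true_and] at hx
    refine Finset.mem_filter.mpr ⟨?_, rfl⟩
    simp only [trip, Finset.mem_filter, Finset.mem_univ, true_and]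
    exact ⟨hx.1, hx.2, hw.1, hw.2.1, hw.2.2.1, hw.2.2.2⟩
  case left_inv =>
    rintro ⟨a, b, c⟩ ht
    simp only [Finset.mem_filter, trip, Finset.mem_univ, true_and, Prod.mk.injEq] at ht
    obtain ⟨-, rfl, rfl⟩ := ht
    rfl
  case right_inv =>
    intro w hw
    rfl

lemma tupl_sum (Γ : SimpleGraph V) (col : Sym2 V → Fin 3) (p q r : Fin 3) :
    (tupl Γ col p q r).card = ∑ x ∈ pPairs Γ col p, ((aS Γ col q r x.1 x.2).card)^2 := by
  have hmap : ∀ t ∈ tupl Γ col p q r, (t.1, t.2.1) ∈ pPairs Γ col p := by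
    rintro ⟨a, b, c, d⟩ ht
    simp only [tupl, Finset.mem_filter, Finset.mem_univ, true_and] at ht
    simp only [pPairs, Finset.mem_filter, Finset.mem_univ, true_and]
    exact ⟨ht.1, ht.2.1⟩
  rw [Finset.card_eq_sum_card_fiberwise hmap]
  refine Finset.sum_congr rfl ?_
  rintro ⟨u, v⟩ hx
  rw [sq, ← Finset.card_product]
  apply Finset.card_bij' (fun t _ => (t.2.2.1, t.2.2.2)) (fun w _ => (u, v, w.1, w.2))
  case hi =>
    rintro ⟨a, b, c, d⟩ ht
    simp only [Finset.mem_filter, tupl, Finset.mem_univ, true_and, Prod.mk.injEq] at ht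
    obtain ⟨⟨hab, cab, h1, c1, h2, c2, h3, c3, h4, c4⟩, rfl, rfl⟩ := ht
    simp only [Finset.mem_product, aS, Finset.mem_filter, Finset.mem_univ, true_and]
    exact ⟨⟨h1, c1, h3, c3⟩, ⟨h2, c2, h4, c4⟩⟩
  case hj =>
    rintro ⟨x, y⟩ hw
    simp only [Finset.mem_product, aS, Finset.mem_filter, Finset.mem_univ, true_and] at hw
    simp only [pPairs, Finset.mem_filter, Finset.mem_univ, true_and] at hx
    refine Finset.mem_filter.mpr ⟨?_, rfl⟩
    simp only [tupl, Finset.mem_filter, Finset.mem_univ, true_and]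
    exact ⟨hx.1, hx.2, hw.1.1, hw.1.2.1, hw.2.1, hw.2.2.1, hw.1.2.2.1, hw.1.2.2.2,
      hw.2.2.2.1, hw.2.2.2.2⟩
  case left_inv =>
    rintro ⟨a, b, c, d⟩ ht
    simp only [Finset.mem_filter, tupl, Finset.mem_univ, true_and, Prod.mk.injEq] at ht
    obtain ⟨-, rfl, rfl⟩ := ht
    rfl
  case right_inv =>
    rintro ⟨x, y⟩ hw
    rfl


lemma key (Γ : SimpleGraph V) (col : Sym2 V → Fin 3) (T : ℕ)
    (hT : T = (rainbowTriangles Γ col).card)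
    (heqn : T ^ 2 = 2 * (colorEdges Γ col 0).card * (colorEdges Γ col 1).card
      * (colorEdges Γ col 2).card)
    (hpos : 0 < T) (p q r : Fin 3) (hpq : p ≠ q) (hpr : p ≠ r) (hqr : q ≠ r) :
    (∃ k : ℕ, 1 ≤ k ∧ ∀ u v : V, Γ.Adj u v → col s(u, v) = p → (aS Γ col q r u v).card = k)
    ∧ (∀ a b z : V, Γ.Adj a b → col s(a, b) = q → Γ.Adj a z → col s(a, z) = r →
        Γ.Adj b z ∧ col s(b, z) = p) := by
  classical
  set P := pPairs Γ col p with hP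
  set f : V × V → ℕ := fun x => (aS Γ col q r x.1 x.2).card with hf
  have hX : ∑ x ∈ P, f x = T := by
    rw [hT, ← card_trip Γ col p q r hpq hpr hqr, trip_sum]
  have hQ : (tupl Γ col p q r).card = ∑ x ∈ P, (f x) ^ 2 := tupl_sum Γ col p q r
  have hn : P.card = 2 * (colorEdges Γ col p).card := card_pPairs Γ col p
  -- the injection φ
  have hphi_maps : ∀ t ∈ tupl Γ col p q r,
      (s(t.1, t.2.2.1), s(t.2.1, t.2.2.2)) ∈ colorEdges Γ col q ×ˢ colorEdges Γ col r := by
    rintro ⟨u, v, x, y⟩ ht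
    simp only [tupl, Finset.mem_filter, Finset.mem_univ, true_and] at ht
    obtain ⟨huv, cuv, hux, cux, huy, cuy, hvx, cvx, hvy, cvy⟩ := ht
    simp only [Finset.mem_product, colorEdges, Finset.mem_filter, Finset.mem_univ, true_and,
      SimpleGraph.mem_edgeSet]
    exact ⟨⟨hux, cux⟩, ⟨hvy, cvy⟩⟩
  have hphi_inj : Set.InjOn (fun t : V × V × V × V => (s(t.1, t.2.2.1), s(t.2.1, t.2.2.2)))
      (tupl Γ col p q r : Set (V × V × V × V)) := by
    rintro ⟨u, v, x, y⟩ ht ⟨u', v', x', y'⟩ ht' heq2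
    simp only [Finset.coe_filter, tupl, Set.mem_setOf_eq, Finset.mem_univ, true_and] at ht ht'
    obtain ⟨huv, cuv, hux, cux, huy, cuy, hvx, cvx, hvy, cvy⟩ := ht
    obtain ⟨huv', cuv', hux', cux', huy', cuy', hvx', cvx', hvy', cvy'⟩ := ht'
    simp only [Prod.mk.injEq, Sym2.eq_iff] at heq2
    obtain ⟨h1, h2⟩ := heq2
    rcases h1 with ⟨rfl, rfl⟩ | ⟨rfl, rfl⟩ <;> rcases h2 with ⟨rfl, rfl⟩ | ⟨rfl, rfl⟩
    · rfl
    · exfalso; rw [Sym2.eq_swap] at cvy'; rw [cuy] at cuv'; exact hpq cuv'.symm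
    · exfalso; rw [Sym2.eq_swap] at cuv'; rw [cvx] at cuv'; exact hpr cuv'.symm
    · exfalso; rw [Sym2.eq_swap] at cuy'; rw [cvx] at cuy'; exact hqr cuy'.symm
  have hM : (colorEdges Γ col q ×ˢ colorEdges Γ col r).card
      = (colorEdges Γ col q).card * (colorEdges Γ col r).card := Finset.card_product _ _
  have hle : (tupl Γ col p q r).card ≤ (colorEdges Γ col q).card * (colorEdges Γ col r).card := by
    rw [← hM]; exact Finset.card_le_card_of_injOn _ hphi_maps hphi_inj
  have hprod : T ^ 2 = P.card * ((colorEdges Γ col q).card * (colorEdges Γ col r).card) := by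
    have hthis := fin3_prod (fun c => (colorEdges Γ col c).card) p q r hpq hpr hqr
    have h0 : T ^ 2 = 2 * ((colorEdges Γ col 0).card * (colorEdges Γ col 1).card
        * (colorEdges Γ col 2).card) := by rw [heqn]; ring
    rw [h0, ← hthis, hn]; ring
  have hcs : (∑ x ∈ P, f x) ^ 2 ≤ P.card * ∑ x ∈ P, (f x) ^ 2 := cauchy_nat P f
  have hnpos : 0 < P.card := by
    rcases Nat.eq_zero_or_pos P.card with h0 | h
    · exfalso
      rw [Finset.card_eq_zero] at h0
      rw [h0, Finset.sum_empty] at hX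
      omega
    · exact h
  have hchain : P.card * ∑ x ∈ P, (f x) ^ 2 = T ^ 2 ∧
      ∑ x ∈ P, (f x) ^ 2 = (colorEdges Γ col q).card * (colorEdges Γ col r).card := by
    have h1 : P.card * ∑ x ∈ P, (f x) ^ 2 ≤ P.card
        * ((colorEdges Γ col q).card * (colorEdges Γ col r).card) := by
      apply Nat.mul_le_mul_left
      rw [← hQ]; exact hle
    rw [hX] at hcs
    constructor
    · omega
    · have h2 : P.card * ∑ x ∈ P, (f x) ^ 2
          = P.card * ((colorEdges Γ col q).card * (colorEdges Γ col r).card) := by omega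
      exact Nat.eq_of_mul_eq_mul_left hnpos h2
  have hconst : ∀ x ∈ P, ∀ y ∈ P, f x = f y := by
    apply cauchy_eq
    rw [hX, hchain.1]
  constructor
  · -- constancy statement
    obtain ⟨x₀, hx₀⟩ := Finset.card_pos.mp hnpos
    refine ⟨f x₀, ?_, ?_⟩
    · rcases Nat.eq_zero_or_pos (f x₀) with h0 | h
      · exfalso
        have hz : ∑ x ∈ P, f x = 0 :=
          Finset.sum_eq_zero (fun x hx => by rw [hconst x hx x₀ hx₀, h0])
        omega
      · exact h
    · intro u v huv hcuv
      have hmem : (u, v) ∈ P := by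
        simp only [hP, pPairs, Finset.mem_filter, Finset.mem_univ, true_and]
        exact ⟨huv, hcuv⟩
      exact hconst (u, v) hmem x₀ hx₀
  · -- surjectivity statement
    have himg : Finset.image (fun t : V × V × V × V => (s(t.1, t.2.2.1), s(t.2.1, t.2.2.2)))
        (tupl Γ col p q r) = colorEdges Γ col q ×ˢ colorEdges Γ col r := by
      apply Finset.eq_of_subset_of_card_le
      · rw [Finset.image_subset_iff]; exact hphi_maps
      · rw [Finset.card_image_of_injOn hphi_inj, hM, hQ, hchain.2]
    intro a b z hab cab haz caz
    have hmem : (s(a, b), s(a, z)) ∈ colorEdges Γ col q ×ˢ colorEdges Γ col r := by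
      simp only [Finset.mem_product, colorEdges, Finset.mem_filter, Finset.mem_univ, true_and,
        SimpleGraph.mem_edgeSet]
      exact ⟨⟨hab, cab⟩, ⟨haz, caz⟩⟩
    rw [← himg, Finset.mem_image] at hmem
    obtain ⟨⟨u, v, x, y⟩, ht, heq2⟩ := hmem
    simp only [tupl, Finset.mem_filter, Finset.mem_univ, true_and] at ht
    obtain ⟨huv, cuv, hux, cux, huy, cuy, hvx, cvx, hvy, cvy⟩ := ht
    simp only [Prod.mk.injEq, Sym2.eq_iff] at heq2
    obtain ⟨h1, h2⟩ := heq2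
    rcases h1 with ⟨rfl, rfl⟩ | ⟨rfl, rfl⟩ <;> rcases h2 with ⟨rfl, rfl⟩ | ⟨rfl, rfl⟩
    · exact absurd huv (Γ.irrefl)
    · exact absurd huy (Γ.irrefl)
    · exact absurd hvx (Γ.irrefl)
    · exact ⟨huv, cuv⟩


def othr (a b : Fin 3) : Fin 3 := ⟨(3 - a.val - b.val) % 3, Nat.mod_lt _ (by norm_num)⟩

lemma othr_spec : ∀ a b : Fin 3, a ≠ b → othr a b ≠ a ∧ othr a b ≠ b := by decide

/-- If a 3-edge-colored graph has exactly `√(2·R·G·B) > 0` rainbow triangles, then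
there is a `d ≥ 1` such that every non-isolated vertex is incident to exactly `d`
edges of each color. -/
theorem stmt14 (Γ : SimpleGraph V) (col : Sym2 V → Fin 3) (R G B T : ℕ)
    (hR : R = (colorEdges Γ col 0).card)
    (hG : G = (colorEdges Γ col 1).card)
    (hB : B = (colorEdges Γ col 2).card)
    (hT : T = (rainbowTriangles Γ col).card)
    (heq : (T : ℝ) = Real.sqrt (2 * R * G * B))
    (hpos : 0 < T) :
    ∃ d : ℕ, 1 ≤ d ∧ ∀ v : V, (∃ w : V, Γ.Adj v w) → ∀ c : Fin 3,
      (Finset.univ.filter (fun w => Γ.Adj v w ∧ col s(v, w) = c)).card = d := by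
  classical
  have heqn : T ^ 2 = 2 * (colorEdges Γ col 0).card * (colorEdges Γ col 1).card
      * (colorEdges Γ col 2).card := by
    have hnn : (0:ℝ) ≤ 2 * R * G * B := by positivity
    have h1 : (T:ℝ)^2 = 2 * R * G * B := by rw [heq, Real.sq_sqrt hnn]
    have h2 : T^2 = 2 * R * G * B := by exact_mod_cast h1
    rw [hR, hG, hB] at h2; exact h2
  have hK := fun (p q r : Fin 3) hpq hpr hqr => key Γ col T hT heqn hpos p q r hpq hpr hqr
  -- nb q v = aS q r v w  for a p-edge (v,w)
  have hset : ∀ p q r : Fin 3, p ≠ q → p ≠ r → q ≠ r → ∀ v w, Γ.Adj v w → col s(v, w) = p →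
      nb Γ col q v = aS Γ col q r v w := by
    intro p q r hpq hpr hqr v w hvw hc
    ext x
    simp only [nb, aS, Finset.mem_filter, Finset.mem_univ, true_and]
    constructor
    · rintro ⟨h1, h2⟩
      obtain ⟨h3, h4⟩ := (hK r p q hpr.symm hqr.symm hpq).2 v w x hvw hc h1 h2
      exact ⟨h1, h2, h3, h4⟩
    · rintro ⟨h1, h2, -, -⟩; exact ⟨h1, h2⟩
  have hset' : ∀ p q r : Fin 3, p ≠ q → p ≠ r → q ≠ r → ∀ u u', Γ.Adj u u' → col s(u, u') = p →
      aS Γ col q r u u' = nb Γ col r u' := by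
    intro p q r hpq hpr hqr u u' huu hc
    ext x
    simp only [nb, aS, Finset.mem_filter, Finset.mem_univ, true_and]
    constructor
    · rintro ⟨-, -, h3, h4⟩; exact ⟨h3, h4⟩
    · rintro ⟨h3, h4⟩
      have hc' : col s(u', u) = p := by rwa [Sym2.eq_swap]
      obtain ⟨h1, h2⟩ := (hK q p r hpq.symm hqr hpr).2 u' u x huu.symm hc' h3 h4
      exact ⟨h1, h2, h3, h4⟩
  -- every endpoint of an edge has edges of every color
  have hall : ∀ v w, Γ.Adj v w → ∀ c : Fin 3, ∃ x, Γ.Adj v x ∧ col s(v, x) = c := by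
    intro v w hvw c
    by_cases hc : col s(v, w) = c
    · exact ⟨w, hvw, hc⟩
    · have hpc : col s(v, w) ≠ c := hc
      obtain ⟨ho1, ho2⟩ := othr_spec (col s(v, w)) c hpc
      obtain ⟨k, hk1, hk2⟩ := (hK (col s(v, w)) c (othr (col s(v, w)) c) hpc ho1.symm ho2.symm).1
      have h2 := hk2 v w hvw rfl
      have hpos' : 0 < (aS Γ col c (othr (col s(v, w)) c) v w).card := by omega
      obtain ⟨x, hx⟩ := Finset.card_pos.mp hpos'
      simp only [aS, Finset.mem_filter, Finset.mem_univ, true_and] at hx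
      exact ⟨x, hx.1, hx.2.1⟩
  -- same-side constancy
  have hE1 : ∀ p q r : Fin 3, p ≠ q → p ≠ r → q ≠ r →
      ∀ v w v' w', Γ.Adj v w → col s(v, w) = p → Γ.Adj v' w' → col s(v', w') = p →
      (nb Γ col q v).card = (nb Γ col q v').card := by
    intro p q r hpq hpr hqr v w v' w' h1 h2 h3 h4
    obtain ⟨k, -, hk⟩ := (hK p q r hpq hpr hqr).1
    rw [hset p q r hpq hpr hqr v w h1 h2, hset p q r hpq hpr hqr v' w' h3 h4,
      hk v w h1 h2, hk v' w' h3 h4]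
  -- cross equality
  have hE2 : ∀ p q r : Fin 3, p ≠ q → p ≠ r → q ≠ r →
      ∀ u u', Γ.Adj u u' → col s(u, u') = p →
      (nb Γ col q u).card = (nb Γ col r u').card := by
    intro p q r hpq hpr hqr u u' h1 h2
    rw [hset p q r hpq hpr hqr u u' h1 h2, hset' p q r hpq hpr hqr u u' h1 h2]
  -- base vertex
  have hTne : (rainbowTriangles Γ col).Nonempty := by
    rw [← Finset.card_pos, ← hT]; exact hpos
  obtain ⟨s0, hs0⟩ := hTne
  simp only [rainbowTriangles, Finset.mem_filter, Finset.mem_univ, true_and] at hs0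
  obtain ⟨a0, b0, c0, -, hab0, -⟩ := hs0
  set d := (nb Γ col 1 a0).card with hd
  -- a0 has a 0-edge
  obtain ⟨w0, hw0, hcw0⟩ := hall a0 b0 hab0 0
  have H1 : ∀ v, (∃ w, Γ.Adj v w) → (nb Γ col 1 v).card = d := by
    rintro v ⟨w, hw⟩
    obtain ⟨x, hx, hcx⟩ := hall v w hw 0
    exact hE1 0 1 2 (by decide) (by decide) (by decide) v x a0 w0 hx hcx hw0 hcw0
  have H2 : ∀ v, (∃ w, Γ.Adj v w) → (nb Γ col 2 v).card = d := by
    rintro v ⟨w, hw⟩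
    obtain ⟨x, hx, hcx⟩ := hall v w hw 0
    rw [hE2 0 2 1 (by decide) (by decide) (by decide) v x hx hcx]
    exact H1 x ⟨v, hx.symm⟩
  have H0 : ∀ v, (∃ w, Γ.Adj v w) → (nb Γ col 0 v).card = d := by
    rintro v ⟨w, hw⟩
    obtain ⟨x, hx, hcx⟩ := hall v w hw 1
    rw [hE2 1 0 2 (by decide) (by decide) (by decide) v x hx hcx]
    exact H2 x ⟨v, hx.symm⟩
  refine ⟨d, ?_, ?_⟩
  · obtain ⟨x, hx, hcx⟩ := hall a0 b0 hab0 1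
    have : x ∈ nb Γ col 1 a0 := by
      simp only [nb, Finset.mem_filter, Finset.mem_univ, true_and]
      exact ⟨hx, hcx⟩
    have := Finset.card_pos.mpr ⟨x, this⟩
    omega
  · intro v hv c
    fin_cases c
    · exact H0 v hv
    · exact H1 v hv
    · exact H2 v hv


end RainbowTri
end
end

section
/- Let Γ be a finite simple graph each of whose edges is colored red, green, or blue, and let K be the number of properly 3-edge-colored copies of K4 in Γ. For each ordered pair (u,v) of vertices such that uv is a red edge, let d⁺(u,v) be the number of vertices w with uw blue and vw green. Then 4·K is at most the sum of d⁺(u,v)^2 over all ordered pairs (u,v) inducing a red edge. -/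
open scoped Classical

noncomputable section

namespace RainbowTri

variable {V : Type*} [Fintype V]

/-- Auxiliary: tuples `(u,v,w,x)` with `uv` red, `wx` red, `uw`, `vx` green, `ux`, `vw` blue. -/
def KT (Γ : SimpleGraph V) (col : Sym2 V → Fin 3) : Finset (V × V × V × V) :=
  Finset.univ.filter (fun t => Γ.Adj t.1 t.2.1 ∧ col s(t.1, t.2.1) = 0 ∧
    Γ.Adj t.2.2.1 t.2.2.2 ∧ col s(t.2.2.1, t.2.2.2) = 0 ∧
    Γ.Adj t.1 t.2.2.1 ∧ col s(t.1, t.2.2.1) = 1 ∧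
    Γ.Adj t.2.1 t.2.2.2 ∧ col s(t.2.1, t.2.2.2) = 1 ∧
    Γ.Adj t.1 t.2.2.2 ∧ col s(t.1, t.2.2.2) = 2 ∧
    Γ.Adj t.2.1 t.2.2.1 ∧ col s(t.2.1, t.2.2.1) = 2)

def quad (t : V × V × V × V) : Finset V := {t.1, t.2.1, t.2.2.1, t.2.2.2}

lemma quad_mem_properK4s (Γ : SimpleGraph V) (col : Sym2 V → Fin 3) :
    ∀ t ∈ KT Γ col, quad t ∈ properK4s Γ col := by
  rintro ⟨u, v, w, x⟩ ht
  simp only [KT, Finset.mem_filter, Finset.mem_univ, true_and] at ht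
  obtain ⟨h1, h2, h3, h4, h5, h6, h7, h8, h9, h10, h11, h12⟩ := ht
  simp only [properK4s, Finset.mem_filter, Finset.mem_univ, true_and]
  exact ⟨u, v, w, x, rfl, h1, h5, h9, h11, h7, h3,
    by rw [h2, h4], by rw [h6, h8], by rw [h10, h12],
    by rw [h2, h6]; decide, by rw [h2, h10]; decide, by rw [h6, h10]; decide⟩

lemma four_le_fiber_canonical (Γ : SimpleGraph V) (col : Sym2 V → Fin 3) (a b c d : V)
    (S : Finset V) (hS : S = {a, b, c, d})
    (hab : Γ.Adj a b) (hac : Γ.Adj a c) (had : Γ.Adj a d)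
    (hbc : Γ.Adj b c) (hbd : Γ.Adj b d) (hcd : Γ.Adj c d)
    (c1 : col s(a, b) = 0) (c2 : col s(c, d) = 0)
    (c3 : col s(a, c) = 1) (c4 : col s(b, d) = 1)
    (c5 : col s(a, d) = 2) (c6 : col s(b, c) = 2) :
    4 ≤ ((KT Γ col).filter (fun t => quad t = S)).card := by
  have hne1 : a ≠ b := hab.ne
  have hne2 : a ≠ c := hac.ne
  have hne3 : a ≠ d := had.ne
  have hne4 : b ≠ c := hbc.ne
  have hne5 : b ≠ d := hbd.ne
  have hne6 : c ≠ d := hcd.ne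
  have sub : ({(a, b, c, d), (b, a, d, c), (c, d, a, b), (d, c, b, a)} :
      Finset (V × V × V × V)) ⊆ (KT Γ col).filter (fun t => quad t = S) := by
    intro t ht
    simp only [Finset.mem_insert, Finset.mem_singleton] at ht
    simp only [KT, quad, hS, Finset.mem_filter, Finset.mem_univ, true_and]
    rcases ht with rfl | rfl | rfl | rfl
    · exact ⟨⟨hab, c1, hcd, c2, hac, c3, hbd, c4, had, c5, hbc, c6⟩, rfl⟩
    · refine ⟨⟨hab.symm, by rwa [Sym2.eq_swap], hcd.symm, by rwa [Sym2.eq_swap],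
        hbd, c4, hac, c3, hbc, c6, had, c5⟩, ?_⟩
      ext y; simp only [Finset.mem_insert, Finset.mem_singleton]; tauto
    · refine ⟨⟨hcd, c2, hab, c1, hac.symm, by rwa [Sym2.eq_swap],
        hbd.symm, by rwa [Sym2.eq_swap], hbc.symm, by rwa [Sym2.eq_swap],
        had.symm, by rwa [Sym2.eq_swap]⟩, ?_⟩
      ext y; simp only [Finset.mem_insert, Finset.mem_singleton]; tauto
    · refine ⟨⟨hcd.symm, by rwa [Sym2.eq_swap], hab.symm, by rwa [Sym2.eq_swap],
        hbd.symm, by rwa [Sym2.eq_swap], hac.symm, by rwa [Sym2.eq_swap],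
        had.symm, by rwa [Sym2.eq_swap], hbc.symm, by rwa [Sym2.eq_swap]⟩, ?_⟩
      ext y; simp only [Finset.mem_insert, Finset.mem_singleton]; tauto
  have hcard : ({(a, b, c, d), (b, a, d, c), (c, d, a, b), (d, c, b, a)} :
      Finset (V × V × V × V)).card = 4 := by
    rw [Finset.card_insert_of_notMem, Finset.card_insert_of_notMem,
      Finset.card_insert_of_notMem, Finset.card_singleton] <;>
      simp only [Finset.mem_insert, Finset.mem_singleton, Prod.mk.injEq, not_or] <;> tauto
  calc 4 = _ := hcard.symm
    _ ≤ _ := Finset.card_le_card sub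

lemma four_le_fiber (Γ : SimpleGraph V) (col : Sym2 V → Fin 3) (S : Finset V)
    (hS : S ∈ properK4s Γ col) :
    4 ≤ ((KT Γ col).filter (fun t => quad t = S)).card := by
  simp only [properK4s, Finset.mem_filter, Finset.mem_univ, true_and] at hS
  obtain ⟨a, b, c, d, hSeq, hab, hac, had, hbc, hbd, hcd, e1, e2, e3, n1, n2, n3⟩ := hS
  have h3 : ∀ t : Fin 3, t = 0 ∨ t = 1 ∨ t = 2 := by decide
  have setcomm : ∀ x y z w : V, ({x, y, z, w} : Finset V) = {x, z, y, w} ∧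
      ({x, y, z, w} : Finset V) = {x, y, w, z} ∧ ({x, y, z, w} : Finset V) = {x, z, w, y} ∧
      ({x, y, z, w} : Finset V) = {x, w, y, z} ∧ ({x, y, z, w} : Finset V) = {x, w, z, y} := by
    intro x y z w
    refine ⟨?_, ?_, ?_, ?_, ?_⟩ <;>
      (ext u; simp only [Finset.mem_insert, Finset.mem_singleton]; tauto)
  rcases h3 (col s(a, b)) with hX | hX | hX <;> rcases h3 (col s(a, c)) with hY | hY | hY <;>
    rcases h3 (col s(a, d)) with hZ | hZ | hZ <;>
    first
      | (exfalso; exact n1 (hX.trans hY.symm))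
      | (exfalso; exact n2 (hX.trans hZ.symm))
      | (exfalso; exact n3 (hY.trans hZ.symm))
      | skip
  -- (0,1,2): (a,b,c,d)
  · exact four_le_fiber_canonical Γ col a b c d S hSeq hab hac had hbc hbd hcd
      hX (e1 ▸ hX) hY (e2 ▸ hY) hZ (e3 ▸ hZ)
  -- (0,2,1): (a,b,d,c)
  · exact four_le_fiber_canonical Γ col a b d c S (hSeq.trans (setcomm a b c d).2.1)
      hab had hac hbd hbc hcd.symm hX (by rw [Sym2.eq_swap]; exact e1 ▸ hX)
      hZ (e3 ▸ hZ) hY (e2 ▸ hY)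
  -- (1,0,2): (a,c,b,d)
  · exact four_le_fiber_canonical Γ col a c b d S (hSeq.trans (setcomm a b c d).1)
      hac hab had hbc.symm hcd hbd hY (e2 ▸ hY) hX (e1 ▸ hX) hZ
      (by rw [Sym2.eq_swap]; exact e3 ▸ hZ)
  -- (1,2,0): (a,d,b,c)
  · exact four_le_fiber_canonical Γ col a d b c S (hSeq.trans (setcomm a b c d).2.2.2.1)
      had hab hac hbd.symm hcd.symm hbc hZ (e3 ▸ hZ) hX
      (by rw [Sym2.eq_swap]; exact e1 ▸ hX) hY (by rw [Sym2.eq_swap]; exact e2 ▸ hY)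
  -- (2,0,1): (a,c,d,b)
  · exact four_le_fiber_canonical Γ col a c d b S (hSeq.trans (setcomm a b c d).2.2.1)
      hac had hab hcd hbc.symm hbd.symm hY (by rw [Sym2.eq_swap]; exact e2 ▸ hY)
      hZ (by rw [Sym2.eq_swap]; exact e3 ▸ hZ) hX (e1 ▸ hX)
  -- (2,1,0): (a,d,c,b)
  · exact four_le_fiber_canonical Γ col a d c b S (hSeq.trans (setcomm a b c d).2.2.2.2)
      had hac hab hcd.symm hbd.symm hbc.symm hZ (by rw [Sym2.eq_swap]; exact e3 ▸ hZ)
      hY (by rw [Sym2.eq_swap]; exact e2 ▸ hY) hX (by rw [Sym2.eq_swap]; exact e1 ▸ hX)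

lemma four_mul_le_KT (Γ : SimpleGraph V) (col : Sym2 V → Fin 3) :
    4 * (properK4s Γ col).card ≤ (KT Γ col).card := by
  rw [Finset.card_eq_sum_card_fiberwise (quad_mem_properK4s Γ col)]
  calc 4 * (properK4s Γ col).card = ∑ _s ∈ properK4s Γ col, 4 := by
        rw [Finset.sum_const, smul_eq_mul, mul_comm]
    _ ≤ _ := Finset.sum_le_sum fun s hs => four_le_fiber Γ col s hs

lemma KT_card_eq (Γ : SimpleGraph V) (col : Sym2 V → Fin 3) :
    (KT Γ col).card = ∑ p ∈ redPairs Γ col, dK Γ col p.1 p.2 := by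
  have hmaps : ∀ t ∈ KT Γ col, (t.1, t.2.1) ∈ redPairs Γ col := by
    rintro ⟨u, v, w, x⟩ ht
    simp only [KT, Finset.mem_filter, Finset.mem_univ, true_and] at ht
    simp only [redPairs, Finset.mem_filter, Finset.mem_univ, true_and]
    exact ⟨ht.1, ht.2.1⟩
  rw [Finset.card_eq_sum_card_fiberwise hmaps]
  refine Finset.sum_congr rfl fun p hp => ?_
  obtain ⟨p1, p2⟩ := p
  simp only [redPairs, Finset.mem_filter, Finset.mem_univ, true_and] at hp
  rw [dK]
  refine Finset.card_bij' (fun t _ => (t.2.2.1, t.2.2.2))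
    (fun q _ => (p1, p2, q.1, q.2)) ?_ ?_ ?_ ?_
  · rintro ⟨u, v, w, x⟩ ht
    simp only [KT, Finset.mem_filter, Finset.mem_univ, true_and, Prod.mk.injEq] at ht ⊢
    obtain ⟨⟨h1, h2, h3, h4, h5, h6, h7, h8, h9, h10, h11, h12⟩, hu, hv⟩ := ht
    subst hu; subst hv
    exact ⟨h3, h4, h5, h6, h7, h8, h9, h10, h11, h12⟩
  · rintro ⟨w, x⟩ hq
    simp only [Finset.mem_filter, Finset.mem_univ, true_and] at hq ⊢
    simp only [KT, Finset.mem_filter, Finset.mem_univ, true_and, Prod.mk.injEq]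
    exact ⟨⟨hp.1, hp.2, hq.1, hq.2.1, hq.2.2.1, hq.2.2.2.1, hq.2.2.2.2.1, hq.2.2.2.2.2.1,
      hq.2.2.2.2.2.2.1, hq.2.2.2.2.2.2.2.1, hq.2.2.2.2.2.2.2.2.1, hq.2.2.2.2.2.2.2.2.2⟩, trivial⟩
  · rintro ⟨u, v, w, x⟩ ht
    simp only [Finset.mem_filter, Prod.mk.injEq] at ht
    obtain ⟨-, hu, hv⟩ := ht
    subst hu; subst hv; rfl
  · rintro ⟨w, x⟩ _; rfl

lemma dK_le_dPlus_mul (Γ : SimpleGraph V) (col : Sym2 V → Fin 3) (u v : V) :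
    dK Γ col u v ≤ dPlus Γ col u v * dPlus Γ col v u := by
  rw [dK, dPlus, dPlus, mul_comm, ← Finset.card_product]
  apply Finset.card_le_card
  rintro ⟨w, x⟩ hq
  simp only [Finset.mem_filter, Finset.mem_univ, true_and, Finset.mem_product] at hq ⊢
  tauto

lemma sum_mul_le_sum_sq (Γ : SimpleGraph V) (col : Sym2 V → Fin 3) :
    ∑ p ∈ redPairs Γ col, dPlus Γ col p.1 p.2 * dPlus Γ col p.2 p.1
      ≤ ∑ p ∈ redPairs Γ col, dPlus Γ col p.1 p.2 ^ 2 := by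
  have hswap : ∀ p ∈ redPairs Γ col, (p.2, p.1) ∈ redPairs Γ col := by
    rintro ⟨u, v⟩ hp
    simp only [redPairs, Finset.mem_filter, Finset.mem_univ, true_and] at hp ⊢
    exact ⟨hp.1.symm, by rw [Sym2.eq_swap]; exact hp.2⟩
  have key : ∑ p ∈ redPairs Γ col, dPlus Γ col p.2 p.1 ^ 2
      = ∑ p ∈ redPairs Γ col, dPlus Γ col p.1 p.2 ^ 2 :=
    Finset.sum_nbij' (fun p => (p.2, p.1)) (fun p => (p.2, p.1)) hswap hswap
      (fun p _ => rfl) (fun p _ => rfl) (fun p _ => rfl)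
  have hsq : ∀ a b : ℕ, 2 * (a * b) ≤ a ^ 2 + b ^ 2 := by
    intro a b; zify; nlinarith [sq_nonneg ((a : ℤ) - b)]
  have h2 : 2 * ∑ p ∈ redPairs Γ col, dPlus Γ col p.1 p.2 * dPlus Γ col p.2 p.1
      ≤ 2 * ∑ p ∈ redPairs Γ col, dPlus Γ col p.1 p.2 ^ 2 := by
    rw [Finset.mul_sum]
    calc ∑ p ∈ redPairs Γ col, 2 * (dPlus Γ col p.1 p.2 * dPlus Γ col p.2 p.1)
        ≤ ∑ p ∈ redPairs Γ col, (dPlus Γ col p.1 p.2 ^ 2 + dPlus Γ col p.2 p.1 ^ 2) :=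
          Finset.sum_le_sum fun p _ => hsq _ _
      _ = ∑ p ∈ redPairs Γ col, dPlus Γ col p.1 p.2 ^ 2
            + ∑ p ∈ redPairs Γ col, dPlus Γ col p.2 p.1 ^ 2 := Finset.sum_add_distrib
      _ = 2 * ∑ p ∈ redPairs Γ col, dPlus Γ col p.1 p.2 ^ 2 := by rw [key, two_mul]
  exact Nat.le_of_mul_le_mul_left h2 (by norm_num)

/-- If `K` is the number of properly 3-edge-colored copies of `K₄`, then `4·K` is at
most the sum of `d⁺(u,v)²` over all ordered pairs `(u,v)` inducing a red edge. -/
theorem stmt17 (Γ : SimpleGraph V) (col : Sym2 V → Fin 3) (K : ℕ)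
    (hK : K = (properK4s Γ col).card) :
    4 * K ≤ ∑ p ∈ redPairs Γ col, (dPlus Γ col p.1 p.2) ^ 2 := by
  rw [hK]
  calc 4 * (properK4s Γ col).card ≤ (KT Γ col).card := four_mul_le_KT Γ col
    _ = ∑ p ∈ redPairs Γ col, dK Γ col p.1 p.2 := KT_card_eq Γ col
    _ ≤ ∑ p ∈ redPairs Γ col, dPlus Γ col p.1 p.2 * dPlus Γ col p.2 p.1 :=
        Finset.sum_le_sum fun p _ => dK_le_dPlus_mul Γ col p.1 p.2
    _ ≤ ∑ p ∈ redPairs Γ col, dPlus Γ col p.1 p.2 ^ 2 := sum_mul_le_sum_sq Γ col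


end RainbowTri
end
end

section
/- Let Γ be a finite simple graph each of whose edges is colored with one of six colors 1,…,6, and let C_i denote the number of edges of color i. Fix a rainbow 6-edge-coloring χ of K4, let H be the number of 4-vertex subsets of Γ inducing a complete graph whose edge coloring is isomorphic to χ, and let a and a' be the χ-colors of some pair of opposite (vertex-disjoint) edges of K4. Then H^2 is at most the product of C_i over the four colors i not in {a, a'}. -/
/-!
The four edges of `K₄` outside the opposite pair `ij, kl` form two perfect matchings,
`{ik, jl}` and `{il, jk}`. A copy of `χ` is the union of the images of the two edges of a
perfect matching, and these images are edges of `Γ` of the matching's colors; hence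
`H ≤ C_{χ(ik)} C_{χ(jl)}` and `H ≤ C_{χ(il)} C_{χ(jk)}`, and multiplying gives the bound.
Since `χ` is a bijection from the six edges onto the six colors, the four colors involved
are exactly those other than `a` and `a'`.
-/

open scoped Classical

noncomputable section

namespace RainbowK4

variable {V : Type*} [Fintype V]

/-- The finset of edges of `Γ` having color `c` among the six colors `Fin 6`. -/
def colorEdges6 (Γ : SimpleGraph V) (col : Sym2 V → Fin 6) (c : Fin 6) : Finset (Sym2 V) :=
  Finset.univ.filter (fun e => e ∈ Γ.edgeSet ∧ col e = c)

/-- `χ` is a rainbow 6-edge-coloring of `K₄` (on vertex set `Fin 4`): distinct edges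
(non-diagonal elements of `Sym2 (Fin 4)`) receive distinct colors. -/
def IsRainbowK4Coloring (χ : Sym2 (Fin 4) → Fin 6) : Prop :=
  ∀ e e' : Sym2 (Fin 4), ¬e.IsDiag → ¬e'.IsDiag → χ e = χ e' → e = e'

/-- The 4-vertex subsets of `Γ` inducing a complete graph whose edge coloring is
isomorphic to `χ`. -/
def chiCopies (Γ : SimpleGraph V) (col : Sym2 V → Fin 6) (χ : Sym2 (Fin 4) → Fin 6) :
    Finset (Finset V) :=
  Finset.univ.filter (fun s => ∃ f : Fin 4 → V, Function.Injective f ∧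
    s = Finset.univ.image f ∧
    ∀ i j : Fin 4, i ≠ j → Γ.Adj (f i) (f j) ∧ col s(f i, f j) = χ s(i, j))

open Finset

theorem ne_and_ne_of_insert_eq_univ :
    ∀ {p q r t : Fin 4}, ({p, q, r, t} : Finset (Fin 4)) = univ → p ≠ q ∧ r ≠ t := by
  decide

theorem card_chiCopies_le_mul (Γ : SimpleGraph V) (col : Sym2 V → Fin 6)
    (χ : Sym2 (Fin 4) → Fin 6) {p q r t : Fin 4}
    (huniv : ({p, q, r, t} : Finset (Fin 4)) = univ) :
    #(chiCopies Γ col χ) ≤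
      #(colorEdges6 Γ col (χ s(p, q))) * #(colorEdges6 Γ col (χ s(r, t))) := by
  obtain ⟨hpq, hrt⟩ := ne_and_ne_of_insert_eq_univ huniv
  rw [← card_product]
  refine card_le_card_of_surjOn (fun e => e.1.toFinset ∪ e.2.toFinset) ?_
  intro s hs
  obtain ⟨f, -, rfl, hf⟩ := (mem_filter.mp hs).2
  refine ⟨(s(f p, f q), s(f r, f t)), ?_, ?_⟩
  · simp [colorEdges6, hf p q hpq, hf r t hrt]
  · simp only [Sym2.toFinset_mk_eq, ← huniv, image_insert, image_singleton, insert_union,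
      singleton_union]

theorem injective_edgeList_and_not_isDiag :
    ∀ {i j k l : Fin 4}, ({i, j, k, l} : Finset (Fin 4)) = univ →
      Function.Injective ![s(i, j), s(k, l), s(i, k), s(j, l), s(i, l), s(j, k)] ∧
      ∀ m, ¬(![s(i, j), s(k, l), s(i, k), s(j, l), s(i, l), s(j, k)] m).IsDiag := by
  decide

theorem prod_filter_ne_opposite_colors {M : Type*} [CommMonoid M] {χ : Sym2 (Fin 4) → Fin 6}
    (hχ : IsRainbowK4Coloring χ) {i j k l : Fin 4}
    (huniv : ({i, j, k, l} : Finset (Fin 4)) = univ) (g : Fin 6 → M) :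
    ∏ c ∈ univ.filter (fun c => c ≠ χ s(i, j) ∧ c ≠ χ s(k, l)), g c =
      g (χ s(i, k)) * g (χ s(j, l)) * (g (χ s(i, l)) * g (χ s(j, k))) := by
  -- listing the edges with the opposite pair first turns `χ` into a permutation of the colors
  set E := ![s(i, j), s(k, l), s(i, k), s(j, l), s(i, l), s(j, k)]
  obtain ⟨hE, hdiag⟩ := injective_edgeList_and_not_isDiag huniv
  have hσ : Function.Bijective (χ ∘ E) := Finite.injective_iff_bijective.mp
    fun m m' h => hE (hχ _ _ (hdiag m) (hdiag m') h)
  change ∏ c ∈ univ.filter (fun c => c ≠ (χ ∘ E) 0 ∧ c ≠ (χ ∘ E) 1), g c =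
    g ((χ ∘ E) 2) * g ((χ ∘ E) 3) * (g ((χ ∘ E) 4) * g ((χ ∘ E) 5))
  generalize χ ∘ E = σ at hσ ⊢
  rw [prod_filter, ← hσ.prod_comp, Fin.prod_univ_six]
  simp [hσ.injective.eq_iff, mul_assoc]

/-- If `χ` is a fixed rainbow 6-edge-coloring of `K₄`, `H` counts the copies of `K₄`
in a 6-edge-colored graph `Γ` colored isomorphically to `χ`, and `a`, `a'` are the
`χ`-colors of some pair of opposite (vertex-disjoint) edges of `K₄`, then `H²` is at
most the product of the numbers of edges of `Γ` of the four remaining colors. -/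
theorem stmt18 (Γ : SimpleGraph V) (col : Sym2 V → Fin 6)
    (χ : Sym2 (Fin 4) → Fin 6) (hχ : IsRainbowK4Coloring χ)
    (C : Fin 6 → ℕ) (hC : ∀ i, C i = (colorEdges6 Γ col i).card)
    (H : ℕ) (hH : H = (chiCopies Γ col χ).card)
    (a a' : Fin 6)
    (hopp : ∃ i j k l : Fin 4, ({i, j, k, l} : Finset (Fin 4)) = Finset.univ ∧
      χ s(i, j) = a ∧ χ s(k, l) = a') :
    H ^ 2 ≤ ∏ i ∈ Finset.univ.filter (fun i : Fin 6 => i ≠ a ∧ i ≠ a'), C i := by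
  obtain ⟨i, j, k, l, huniv, rfl, rfl⟩ := hopp
  have hikjl : ({i, k, j, l} : Finset (Fin 4)) = univ := by rwa [insert_comm k j]
  have hiljk : ({i, l, j, k} : Finset (Fin 4)) = univ := by
    rwa [insert_comm l j, pair_comm l k]
  rw [prod_filter_ne_opposite_colors hχ huniv, hH, sq]
  simp only [hC]
  exact Nat.mul_le_mul (card_chiCopies_le_mul Γ col χ hikjl)
    (card_chiCopies_le_mul Γ col χ hiljk)

end RainbowK4
end
end
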